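/- Let G be a finite group, H ≤ G a subgroup, x_1 = 1, x_2, …, x_s a complete set of representatives for the double cosets of H in G, and let V be an irreducible finite-dimensional complex representation of G whose character χ_V takes only rational values and which satisfies dim_ℂ V^H = 1. Then in ℂ[G]: p_H · e_V = (dim V / |G|) · ∑_{i=1}^s |H ∩ x_i H x_i⁻¹| · χ_V(q_i) · q_i, where q_i := (1/|H|) · ∑_{y ∈ Hx_iH} y. -/

import Mathlib

open scoped Classical

/-- The averaging idempotent `p_H = (1/|H|) ∑_{h ∈ H} h` in the complex group algebra. -/
noncomputable def avgIdemC {G : Type*} [Group G] [Fintype G] (H : Subgroup G) :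
    MonoidAlgebra ℂ G :=
  (Nat.card H : ℂ)⁻¹ • ∑ h ∈ (H : Set G).toFinset, MonoidAlgebra.single h (1 : ℂ)

/-- The double coset `HxH` as a finset. -/
noncomputable def dosetFinset {G : Type*} [Group G] [Fintype G] (H : Subgroup G) (x : G) :
    Finset G :=
  {y : G | ∃ h ∈ H, ∃ h' ∈ H, y = h * x * h'}.toFinset

/-- `|H ∩ xHx⁻¹|`. -/
noncomputable def interConjCard {G : Type*} [Group G] [Fintype G] (H : Subgroup G) (x : G) :
    ℕ :=
  Nat.card {g : G // g ∈ H ∧ ∃ h ∈ H, g = x * h * x⁻¹}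

/-- The character of a finite-dimensional representation. -/
noncomputable def repChar {G V : Type*} [Group G] [AddCommGroup V] [Module ℂ V]
    (ρ : Representation ℂ G V) (g : G) : ℂ :=
  LinearMap.trace ℂ V (ρ g)

/-- Irreducibility: `V` is nonzero and has no proper nonzero `G`-invariant subspace. -/
def IsIrreducibleRep {G V : Type*} [Group G] [AddCommGroup V] [Module ℂ V]
    (ρ : Representation ℂ G V) : Prop :=
  Nontrivial V ∧ ∀ W : Submodule ℂ V, (∀ g : G, ∀ v ∈ W, ρ g v ∈ W) → W = ⊥ ∨ W = ⊤

/-- The subspace `V^H` of `H`-fixed vectors. -/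
def fixedSubmodule {G V : Type*} [Group G] [AddCommGroup V] [Module ℂ V]
    (ρ : Representation ℂ G V) (H : Subgroup G) : Submodule ℂ V where
  carrier := {v : V | ∀ h ∈ H, ρ h v = v}
  add_mem' := by
    intro a b ha hb h hh
    simp [map_add, ha h hh, hb h hh]
  zero_mem' := by
    intro h hh
    simp
  smul_mem' := by
    intro c v hv h hh
    simp [map_smul, hv h hh]

/-- The central idempotent `e_V = (dim V / |G|) ∑_{g} χ_V(g⁻¹) g` of `ℂ[G]`. -/
noncomputable def centralIdem {G V : Type*} [Group G] [Fintype G] [AddCommGroup V]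
    [Module ℂ V] (ρ : Representation ℂ G V) : MonoidAlgebra ℂ G :=
  ((Module.finrank ℂ V : ℂ) / (Fintype.card G : ℂ)) •
    ∑ g : G, repChar ρ g⁻¹ • MonoidAlgebra.single g (1 : ℂ)

/-- The Hecke algebra basis element `q_x = (1/|H|) ∑_{y ∈ HxH} y`. -/
noncomputable def heckeElt {G : Type*} [Group G] [Fintype G] (H : Subgroup G) (x : G) :
    MonoidAlgebra ℂ G :=
  (Nat.card H : ℂ)⁻¹ • ∑ y ∈ dosetFinset H x, MonoidAlgebra.single y (1 : ℂ)


/-!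
Expanding the product, `p_H · e_V = (dim V / (|G| |H|)) ∑_z (∑_{h ∈ H} χ(z⁻¹ h)) z`, and the
coefficient of `z` only depends on the double coset `HxH ∋ z`, since `χ` is a class function.
Counting the pairs `(a, b) ∈ H × H` with `a x b = y` (each fibre is in bijection with
`H ∩ xHx⁻¹`) gives `∑_{a, b ∈ H} χ(a x b) = |H ∩ xHx⁻¹| ∑_{y ∈ HxH} χ(y)`, while the left side is
`|H| ∑_{h ∈ H} χ(x⁻¹ h)` as soon as `χ(g⁻¹) = χ(g)`. That holds for rational `χ`, because
`χ(g⁻¹)` is the complex conjugate of `χ(g)`: the eigenvalues of `ρ(g)` are roots of unity.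
-/

open Finset

namespace Polynomial

variable {R : Type*} [CommSemiring R]

theorem reverse_X : (X : R[X]).reverse = 1 :=
  calc (X : R[X]).reverse = (X * C (1 : R)).reverse := by rw [C_1, mul_one]
    _ = 1 := by rw [reverse_X_mul, reverse_C, C_1]

theorem reverse_X_sub_C {K : Type*} [Field K] (μ : K) :
    (X - C μ).reverse = C (-μ) * X + C 1 := by
  rw [sub_eq_add_neg, ← C_neg, reverse_add_C, natDegree_X, pow_one, reverse_X, C_1, add_comm]

theorem reverse_multiset_prod [NoZeroDivisors R] (s : Multiset R[X]) :
    s.prod.reverse = (s.map reverse).prod := by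
  induction s using Multiset.induction_on with
  | empty => simpa using reverse_C (1 : R)
  | cons p s ih =>
    rw [Multiset.prod_cons, reverse_mul_of_domain, ih, Multiset.map_cons, Multiset.prod_cons]

theorem roots_reverse_of_splits {K : Type*} [Field K] {p : K[X]} (hp : p.Splits)
    (h0 : p.coeff 0 ≠ 0) : p.reverse.roots = p.roots.map (·⁻¹) := by
  have hroots : ∀ μ ∈ p.roots, μ ≠ 0 := by
    rintro μ hμ rfl
    exact h0 (coeff_zero_eq_eval_zero p ▸ (mem_roots'.mp hμ).2)
  have hlc : p.leadingCoeff ≠ 0 := fun h => h0 (by simp [leadingCoeff_eq_zero.mp h])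
  have hfactor : ∀ μ ∈ p.roots, ((X - C μ).reverse).roots = {μ⁻¹} := fun μ hμ => by
    rw [reverse_X_sub_C, roots_C_mul_X_add_C _ (neg_ne_zero.mpr (hroots μ hμ))]
    simp
  conv_lhs => rw [hp.eq_prod_roots]
  rw [reverse_mul_of_domain, reverse_C, reverse_multiset_prod, roots_C_mul _ hlc,
    Multiset.map_map, roots_multiset_prod, Multiset.bind_map]
  · exact (Multiset.bind_congr hfactor).trans (Multiset.bind_singleton _ _)
  · simp only [Multiset.mem_map, Function.comp_apply, reverse_eq_zero, not_exists, not_and]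
    exact fun μ _ => X_sub_C_ne_zero μ

end Polynomial

namespace Matrix

open Polynomial

variable {n K : Type*} [Fintype n] [DecidableEq n] [Field K]

theorem roots_charpoly_inv [IsAlgClosed K] {A : Matrix n n K} (hA : IsUnit A) :
    A⁻¹.charpoly.roots = A.charpoly.roots.map (·⁻¹) := by
  have hdet : A.det ≠ 0 := (isUnit_iff_isUnit_det A).mp hA |>.ne_zero
  have hcoeff : A.charpoly.coeff 0 ≠ 0 := by
    rw [det_eq_sign_charpoly_coeff] at hdet
    exact right_ne_zero_of_mul hdet
  have hscalar : (-1 : K[X]) ^ Fintype.card n * C (Ring.inverse A.det) =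
      C ((-1) ^ Fintype.card n * A.det⁻¹) := by simp [Ring.inverse_eq_inv']
  rw [charpoly_inv A hA, ← reverse_charpoly, hscalar, roots_C_mul _ (by simp [hdet]),
    roots_reverse_of_splits (IsAlgClosed.splits _) hcoeff]

theorem pow_eq_one_of_mem_roots_charpoly {A : Matrix n n K} {k : ℕ} (hA : A ^ k = 1) {μ : K}
    (hμ : μ ∈ A.charpoly.roots) : μ ^ k = 1 := by
  have hσ : μ ^ k ∈ spectrum K (1 : Matrix n n K) :=
    hA ▸ spectrum.pow_mem_pow A k (mem_spectrum_iff_isRoot_charpoly.mpr (isRoot_of_mem_roots hμ))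
  cases subsingleton_or_nontrivial (Matrix n n K)
  · simp [spectrum.of_subsingleton] at hσ
  · simpa [spectrum.one_eq] using hσ

theorem trace_inv_eq_conj_trace_of_pow_eq_one {A : Matrix n n ℂ} {k : ℕ} (hk : k ≠ 0)
    (hA : A ^ k = 1) : A⁻¹.trace = starRingEnd ℂ A.trace := by
  rw [trace_eq_sum_roots_charpoly, trace_eq_sum_roots_charpoly,
    roots_charpoly_inv (IsUnit.of_pow_eq_one hA hk), map_multiset_sum]
  congr 1
  refine Multiset.map_congr rfl fun μ hμ => Complex.inv_eq_conj ?_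
  exact Complex.norm_eq_one_of_pow_eq_one (pow_eq_one_of_mem_roots_charpoly hA hμ) hk

end Matrix

section DoubleCoset

variable {G : Type*} [Group G] [Fintype G] {H : Subgroup G} {x y : G}

theorem mem_dosetFinset : y ∈ dosetFinset H x ↔ ∃ h ∈ H, ∃ h' ∈ H, y = h * x * h' := by
  simp [dosetFinset]

theorem card_filter_mul_mul_eq_interConjCard (hy : y ∈ dosetFinset H x) :
    #{p : H × H | (p.1 : G) * x * p.2 = y} = interConjCard H x := by
  obtain ⟨a, ha, b, hb, rfl⟩ := mem_dosetFinset.mp hy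
  have key : ∀ p : H × H, (p.1 : G) * x * p.2 = a * x * b →
      a⁻¹ * p.1 = x * (b * (p.2 : G)⁻¹) * x⁻¹ := fun p hp => by
    rw [show a⁻¹ * (p.1 : G) = a⁻¹ * (p.1 * x * p.2) * (p.2 : G)⁻¹ * x⁻¹ by group, hp]
    group
  rw [interConjCard, Nat.card_eq_fintype_card, Fintype.card_subtype]
  refine Finset.card_bij' (fun p _ => a⁻¹ * p.1)
    (fun k hk => (⟨a * k, ?_⟩, ⟨x⁻¹ * k⁻¹ * x * b, ?_⟩)) ?_ ?_ ?_ ?_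
  all_goals simp only [mem_filter, mem_univ, true_and] at *
  · exact mul_mem ha hk.1
  · obtain ⟨-, h, hh, rfl⟩ := hk
    simpa [mul_assoc] using mul_mem (inv_mem hh) hb
  · exact fun p hp => ⟨mul_mem (inv_mem ha) p.1.2, _, mul_mem hb (inv_mem p.2.2), key p hp⟩
  · exact fun k _ => by group
  · refine fun p hp => Prod.ext (Subtype.ext ?_) (Subtype.ext ?_)
    · simp
    · simp only [key p hp]
      group
  · simp

theorem image_mul_mul_eq_dosetFinset :
    (univ : Finset (H × H)).image (fun p => (p.1 : G) * x * p.2) = dosetFinset H x := by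
  ext y
  simp [mem_dosetFinset, eq_comm]

theorem sum_mul_mul_eq_interConjCard_smul {M : Type*} [AddCommMonoid M] (f : G → M) :
    ∑ a : H, ∑ b : H, f (a * x * b) = interConjCard H x • ∑ y ∈ dosetFinset H x, f y := by
  rw [← Fintype.sum_prod_type', Finset.sum_comp, image_mul_mul_eq_dosetFinset, smul_sum]
  exact sum_congr rfl fun y hy => by rw [card_filter_mul_mul_eq_interConjCard hy]

end DoubleCoset

section Character

variable {G V : Type*} [Group G] [AddCommGroup V] [Module ℂ V] (ρ : Representation ℂ G V)

theorem repChar_mul_comm (a b : G) : repChar ρ (a * b) = repChar ρ (b * a) := by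
  simp only [repChar, map_mul, LinearMap.trace_mul_comm]

variable [Fintype G] {H : Subgroup G} {x z : G}

theorem repChar_inv [FiniteDimensional ℂ V] (g : G) :
    repChar ρ g⁻¹ = starRingEnd ℂ (repChar ρ g) := by
  let b := Module.finBasis ℂ V
  let φ : G →* Matrix (Fin (Module.finrank ℂ V)) (Fin (Module.finrank ℂ V)) ℂ :=
    (LinearMap.toMatrixAlgEquiv b).toMonoidHom.comp ρ
  have hφ : ∀ g, repChar ρ g = (φ g).trace := fun g =>
    LinearMap.trace_eq_matrix_trace ℂ b (ρ g)
  have hinv : φ g⁻¹ = (φ g)⁻¹ :=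
    (Matrix.inv_eq_right_inv (by rw [← map_mul, mul_inv_cancel, map_one])).symm
  have hpow : φ g ^ Fintype.card G = 1 := by rw [← map_pow, pow_card_eq_one, map_one]
  rw [hφ, hφ, hinv, Matrix.trace_inv_eq_conj_trace_of_pow_eq_one Fintype.card_ne_zero hpow]

theorem sum_repChar_inv_mul_of_mem_dosetFinset (hz : z ∈ dosetFinset H x) :
    ∑ h : H, repChar ρ (z⁻¹ * h) = ∑ h : H, repChar ρ (x⁻¹ * h) := by
  obtain ⟨a, ha, b, hb, rfl⟩ := mem_dosetFinset.mp hz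
  refine Fintype.sum_equiv ((Equiv.mulLeft ⟨a, ha⟩⁻¹).trans (Equiv.mulRight ⟨b, hb⟩⁻¹)) _ _
    fun h => ?_
  simp only [Equiv.trans_apply, Equiv.coe_mulLeft, Equiv.coe_mulRight, Subgroup.coe_mul,
    Subgroup.coe_inv, mul_inv_rev, mul_assoc]
  rw [repChar_mul_comm]
  simp only [mul_assoc]

theorem card_smul_sum_repChar_inv_mul (hχ : ∀ g, repChar ρ g⁻¹ = repChar ρ g) :
    Nat.card H • ∑ h : H, repChar ρ (x⁻¹ * h) =
      interConjCard H x • ∑ y ∈ dosetFinset H x, repChar ρ y := by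
  -- both sides equal `∑ a b : H, χ (a * x * b)`
  have hrot : ∀ a : H, ∑ b : H, repChar ρ (a * x * b) = ∑ c : H, repChar ρ (x * c) := fun a =>
    Fintype.sum_equiv (Equiv.mulRight a) _ _ fun b => by
      rw [Equiv.coe_mulRight, Subgroup.coe_mul, mul_assoc, repChar_mul_comm, mul_assoc]
  have hinv : ∑ c : H, repChar ρ (x * c) = ∑ h : H, repChar ρ (x⁻¹ * h) :=
    Fintype.sum_equiv (Equiv.inv H) _ _ fun c => by
      rw [← hχ, Equiv.inv_apply, Subgroup.coe_inv, mul_inv_rev, repChar_mul_comm]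
  rw [← sum_mul_mul_eq_interConjCard_smul, Fintype.sum_congr _ _ hrot, sum_const, card_univ,
    hinv, Nat.card_eq_fintype_card]

end Character

section GroupAlgebra

open MonoidAlgebra

variable {G : Type*} [Group G] [Fintype G]

theorem avgIdemC_mul_centralIdem {V : Type*} [AddCommGroup V] [Module ℂ V]
    (ρ : Representation ℂ G V) (H : Subgroup G) :
    avgIdemC H * centralIdem ρ =
      ((Nat.card H : ℂ)⁻¹ * ((Module.finrank ℂ V : ℂ) / (Fintype.card G : ℂ))) •
        ∑ z : G, (∑ h : H, repChar ρ (z⁻¹ * h)) • single z (1 : ℂ) := by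
  rw [avgIdemC, centralIdem, smul_mul_smul_comm, ← Finset.sum_set_coe]
  congr 1
  calc (∑ h : H, single (h : G) (1 : ℂ)) * ∑ g : G, repChar ρ g⁻¹ • single g (1 : ℂ)
      = ∑ h : H, ∑ g : G, repChar ρ g⁻¹ • single (h * g) (1 : ℂ) := by
        simp only [sum_mul_sum, mul_smul_comm, single_mul_single, mul_one]
    _ = ∑ h : H, ∑ z : G, repChar ρ (z⁻¹ * h) • single z (1 : ℂ) :=
        Fintype.sum_congr _ _ fun h => Fintype.sum_equiv (Equiv.mulLeft (h : G)) _ _ fun g => by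
          simp
    _ = ∑ z : G, (∑ h : H, repChar ρ (z⁻¹ * h)) • single z (1 : ℂ) := by
        rw [Finset.sum_comm]
        simp only [Finset.sum_smul]

theorem sum_smul_heckeElt {ι : Type*} [Fintype ι] {H : Subgroup G} {x : ι → G}
    (hreps : ∀ g : G, ∃! i, g ∈ dosetFinset H (x i)) (c : ι → ℂ) (F : G → ℂ)
    (hF : ∀ i, ∀ z ∈ dosetFinset H (x i), F z = c i) :
    ∑ i, c i • heckeElt H (x i) = (Nat.card H : ℂ)⁻¹ • ∑ z : G, F z • single z (1 : ℂ) := by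
  choose idx hidx hidx_unique using hreps
  have hfiber : ∀ i, ({z | idx z = i} : Finset G) = dosetFinset H (x i) := fun i => by
    ext z
    simp only [Finset.mem_filter, Finset.mem_univ, true_and]
    exact ⟨fun h => h ▸ hidx z, fun hz => (hidx_unique z i hz).symm⟩
  simp only [heckeElt, smul_comm (c _), ← Finset.smul_sum]
  congr 1
  rw [← Finset.sum_fiberwise Finset.univ idx]
  refine Fintype.sum_congr _ _ fun i => ?_
  rw [hfiber, Finset.smul_sum]
  exact Finset.sum_congr rfl fun z hz => by rw [hF i z hz]

end GroupAlgebra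

theorem avgIdem_mul_centralIdem_eq_of_rat_general {G V : Type*} [Group G] [Fintype G]
    [AddCommGroup V] [Module ℂ V] [FiniteDimensional ℂ V]
    (ρ : Representation ℂ G V)
    (hrat : ∀ g : G, ∃ q : ℚ, repChar ρ g = (q : ℂ))
    (H : Subgroup G)
    (s : ℕ) (x : Fin s → G)
    (hreps : ∀ g : G, ∃! i : Fin s, ∃ h ∈ H, ∃ h' ∈ H, g = h * x i * h') :
    avgIdemC H * centralIdem ρ =
      ((Module.finrank ℂ V : ℂ) / (Fintype.card G : ℂ)) •
        ∑ i : Fin s,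
          ((interConjCard H (x i) : ℂ) *
              ((Nat.card H : ℂ)⁻¹ * ∑ y ∈ dosetFinset H (x i), repChar ρ y)) •
            heckeElt H (x i) := by
  have hχ : ∀ g, repChar ρ g⁻¹ = repChar ρ g := fun g => by
    obtain ⟨q, hq⟩ := hrat g
    rw [repChar_inv, hq, map_ratCast]
  have hH : (Nat.card H : ℂ) ≠ 0 := Nat.cast_ne_zero.mpr Nat.card_pos.ne'
  rw [avgIdemC_mul_centralIdem, mul_comm, ← smul_smul,
    sum_smul_heckeElt (fun g => by simpa only [mem_dosetFinset] using hreps g) _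
      (fun z => ∑ h : H, repChar ρ (z⁻¹ * h))]
  intro i z hz
  have hcount := card_smul_sum_repChar_inv_mul ρ hχ (H := H) (x := x i)
  rw [sum_repChar_inv_mul_of_mem_dosetFinset ρ hz]
  simp only [nsmul_eq_mul] at hcount
  field_simp
  linear_combination hcount

/-- If moreover `χ_V` is rational-valued and `dim V^H = 1`, then
`p_H · e_V = (dim V / |G|) ∑_i |H ∩ x_i H x_i⁻¹| · χ_V(q_i) · q_i`,
where `χ_V(q_i) = (1/|H|) ∑_{y ∈ H x_i H} χ_V(y)`. -/
theorem avgIdem_mul_centralIdem_eq_of_rat {G V : Type*} [Group G] [Fintype G]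
    [AddCommGroup V] [Module ℂ V] [FiniteDimensional ℂ V]
    (ρ : Representation ℂ G V) (hirr : IsIrreducibleRep ρ)
    (hrat : ∀ g : G, ∃ q : ℚ, repChar ρ g = (q : ℂ))
    (H : Subgroup G) (hfix : Module.finrank ℂ (fixedSubmodule ρ H) = 1)
    (s : ℕ) (hs : 0 < s) (x : Fin s → G) (hx1 : x ⟨0, hs⟩ = 1)
    (hreps : ∀ g : G, ∃! i : Fin s, ∃ h ∈ H, ∃ h' ∈ H, g = h * x i * h') :
    avgIdemC H * centralIdem ρ =
      ((Module.finrank ℂ V : ℂ) / (Fintype.card G : ℂ)) •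
        ∑ i : Fin s,
          ((interConjCard H (x i) : ℂ) *
              ((Nat.card H : ℂ)⁻¹ * ∑ y ∈ dosetFinset H (x i), repChar ρ y)) •
            heckeElt H (x i) :=
  avgIdem_mul_centralIdem_eq_of_rat_general ρ hrat H s x hreps
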